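/- Lower bound on the binary quadratic program: let A, B_1, …, B_m be symmetric real n×n matrices, b ∈ ℝ^m, γ > 0, and let {1,…,m} be partitioned into index sets I_eq and I_in. Suppose x ∈ {−1, +1}^n is such that the rank-one matrix X = x xᵀ satisfies ⟨B_i, X⟩ = b_i for all i ∈ I_eq and ⟨B_i, X⟩ ≤ b_i for all i ∈ I_in. Then for every u ∈ ℝ^m with u_i ≥ 0 for all i ∈ I_in and every γ > 0, one has d_γ(u) − n²/(2γ) ≤ xᵀ A x, where d_γ(u) = −uᵀb − (γ/2)‖Π(−A − Σ_{i=1}^m u_i B_i)‖²_F and Π denotes the metric projection onto the PSD cone. (Proposition 4) -/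

import Mathlib

open Matrix

/-- Frobenius (trace) inner product of two real `n × n` matrices. -/
noncomputable def frobInner {n : ℕ} (A B : Matrix (Fin n) (Fin n) ℝ) : ℝ :=
  (Aᵀ * B).trace

/-- Squared Frobenius norm of a real `n × n` matrix. -/
noncomputable def frobNormSq {n : ℕ} (X : Matrix (Fin n) (Fin n) ℝ) : ℝ :=
  (Xᵀ * X).trace

/-- Frobenius norm of a real `n × n` matrix. -/
noncomputable def frobNorm {n : ℕ} (X : Matrix (Fin n) (Fin n) ℝ) : ℝ :=
  Real.sqrt (frobNormSq X)

/-- `proj` is the metric projection onto the PSD cone: for every symmetric `X`,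
`proj X` is PSD and is nearest to `X` in Frobenius norm among all PSD matrices. -/
def IsPSDProjection {n : ℕ}
    (proj : Matrix (Fin n) (Fin n) ℝ → Matrix (Fin n) (Fin n) ℝ) : Prop :=
  ∀ X : Matrix (Fin n) (Fin n) ℝ, X.IsSymm →
    (proj X).PosSemidef ∧
      ∀ Y : Matrix (Fin n) (Fin n) ℝ, Y.PosSemidef →
        frobNorm (proj X - X) ≤ frobNorm (Y - X)

/-- `C(u) = −A − Σᵢ uᵢ Bᵢ`. -/
noncomputable def Cmat {n m : ℕ} (A : Matrix (Fin n) (Fin n) ℝ)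
    (B : Fin m → Matrix (Fin n) (Fin n) ℝ) (u : Fin m → ℝ) :
    Matrix (Fin n) (Fin n) ℝ :=
  -A - ∑ i, u i • B i

/-- `d_γ(u) = −uᵀb − (γ/2)‖Π(C(u))‖²_F`. -/
noncomputable def dualObj {n m : ℕ} (A : Matrix (Fin n) (Fin n) ℝ)
    (B : Fin m → Matrix (Fin n) (Fin n) ℝ) (b : Fin m → ℝ) (γ : ℝ)
    (proj : Matrix (Fin n) (Fin n) ℝ → Matrix (Fin n) (Fin n) ℝ)
    (u : Fin m → ℝ) : ℝ :=
  -(∑ i, u i * b i) - (γ / 2) * frobNormSq (proj (Cmat A B u))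

/-! The matrix `X = x xᵀ` is PSD with `‖X‖_F = n`, and `xᵀAx = ⟨A, X⟩ = -⟨C(u), X⟩ - Σᵢ uᵢ⟨Bᵢ, X⟩`.
Feasibility of `x` and the sign of `u` on `I_in` give `Σᵢ uᵢ⟨Bᵢ, X⟩ ≤ uᵀb`. Since `Π(C(u))` is
nearest to `C(u)` in the PSD cone and `Π(C(u)) + tX` stays in the cone for `t ≥ 0`, first-order
optimality gives `⟨C(u), X⟩ ≤ ⟨Π(C(u)), X⟩`, and Cauchy–Schwarz with AM–GM bounds this by
`n‖Π(C(u))‖_F ≤ (γ/2)‖Π(C(u))‖²_F + n²/(2γ)`. -/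

open scoped RealInnerProductSpace

theorem inner_le_inner_of_forall_norm_le_norm_add_smul {E : Type*} [NormedAddCommGroup E]
    [InnerProductSpace ℝ E] {c p x : E} (h : ∀ t : ℝ, 0 < t → ‖p - c‖ ≤ ‖p + t • x - c‖) :
    ⟪x, c⟫ ≤ ⟪x, p⟫ := by
  have hslope : ∀ t : ℝ, 0 < t → 0 ≤ 2 * ⟪x, p - c⟫ + t * ‖x‖ ^ 2 := by
    intro t ht
    have hsq := pow_le_pow_left₀ (norm_nonneg _) (h t ht) 2
    rw [show p + t • x - c = (p - c) + t • x by abel, norm_add_sq_real, inner_smul_right,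
      norm_smul, Real.norm_of_nonneg ht.le, real_inner_comm] at hsq
    nlinarith
  have hlim : Filter.Tendsto (fun t : ℝ => 2 * ⟪x, p - c⟫ + t * ‖x‖ ^ 2)
      (nhdsWithin 0 (Set.Ioi 0)) (nhds (2 * ⟪x, p - c⟫)) := by
    have : Continuous (fun t : ℝ => 2 * ⟪x, p - c⟫ + t * ‖x‖ ^ 2) := by fun_prop
    simpa using (this.tendsto 0).mono_left nhdsWithin_le_nhds
  have := ge_of_tendsto hlim (eventually_nhdsWithin_of_forall hslope)
  rw [inner_sub_right] at this
  linarith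

noncomputable def frobVec (n : ℕ) :
    Matrix (Fin n) (Fin n) ℝ →ₗ[ℝ] EuclideanSpace ℝ (Fin n × Fin n) :=
  (WithLp.linearEquiv 2 ℝ (Fin n × Fin n → ℝ)).symm.toLinearMap ∘ₗ
    (LinearEquiv.curry ℝ ℝ (Fin n) (Fin n)).symm.toLinearMap

theorem frobInner_eq_inner {n : ℕ} (X Y : Matrix (Fin n) (Fin n) ℝ) :
    frobInner X Y = ⟪frobVec n X, frobVec n Y⟫ := by
  simp only [frobInner, trace, diag_apply, Matrix.mul_apply, transpose_apply, frobVec,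
    PiLp.inner_apply, RCLike.inner_apply, Real.ringHom_apply, mul_comm, Fintype.sum_prod_type]
  exact Finset.sum_comm

theorem frobNormSq_eq_norm_sq {n : ℕ} (X : Matrix (Fin n) (Fin n) ℝ) :
    frobNormSq X = ‖frobVec n X‖ ^ 2 := by
  rw [← real_inner_self_eq_norm_sq, ← frobInner_eq_inner]
  rfl

theorem frobNorm_eq_norm {n : ℕ} (X : Matrix (Fin n) (Fin n) ℝ) :
    frobNorm X = ‖frobVec n X‖ := by
  rw [frobNorm, frobNormSq_eq_norm_sq, Real.sqrt_sq (norm_nonneg _)]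

theorem frobInner_le_frobInner_of_isPSDProjection {n : ℕ}
    {proj : Matrix (Fin n) (Fin n) ℝ → Matrix (Fin n) (Fin n) ℝ} (hproj : IsPSDProjection proj)
    {C X : Matrix (Fin n) (Fin n) ℝ} (hC : C.IsSymm) (hX : X.PosSemidef) :
    frobInner X C ≤ frobInner X (proj C) := by
  obtain ⟨hP, hnear⟩ := hproj C hC
  simp only [frobInner_eq_inner]
  refine inner_le_inner_of_forall_norm_le_norm_add_smul fun t ht => ?_
  have := hnear _ (hP.add (hX.smul ht.le))
  simpa only [frobNorm_eq_norm, map_sub, map_add, map_smul] using this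

theorem frobNormSq_vecMulVec_self {n : ℕ} (x : Fin n → ℝ) :
    frobNormSq (vecMulVec x x) = (x ⬝ᵥ x) ^ 2 := by
  simp only [frobNormSq, dotProduct, trace, Matrix.mul_apply, diag, transpose_apply,
    vecMulVec_apply, sq, Finset.sum_mul, Finset.mul_sum]
  exact Finset.sum_congr rfl fun _ _ => Finset.sum_congr rfl fun _ _ => by ring

theorem dotProduct_self_of_sign {n : ℕ} {x : Fin n → ℝ} (hx : ∀ i, x i = 1 ∨ x i = -1) :
    x ⬝ᵥ x = n := by
  have : ∀ i, x i * x i = 1 := fun i => by rcases hx i with h | h <;> simp [h]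
  simp [dotProduct, this]

theorem dotProduct_mulVec_eq_frobInner {n : ℕ} (A : Matrix (Fin n) (Fin n) ℝ) (x : Fin n → ℝ) :
    x ⬝ᵥ A *ᵥ x = frobInner (vecMulVec x x) A := by
  simp only [frobInner, dotProduct, trace, Matrix.mul_apply, diag, mulVec, transpose_apply, vecMulVec_apply, Finset.mul_sum]
  rw [Finset.sum_comm]
  exact Finset.sum_congr rfl fun _ _ => Finset.sum_congr rfl fun _ _ => by ring

theorem isSymm_Cmat {n m : ℕ} {A : Matrix (Fin n) (Fin n) ℝ} (hA : A.IsSymm)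
    {B : Fin m → Matrix (Fin n) (Fin n) ℝ} (hB : ∀ i, (B i).IsSymm) (u : Fin m → ℝ) :
    (Cmat A B u).IsSymm := by
  simp [IsSymm, Cmat, transpose_sum, hA.eq, fun i => (hB i).eq]

theorem frobInner_Cmat {n m : ℕ} (X A : Matrix (Fin n) (Fin n) ℝ)
    (B : Fin m → Matrix (Fin n) (Fin n) ℝ) (u : Fin m → ℝ) :
    frobInner X (Cmat A B u) = -frobInner X A - ∑ i, u i * frobInner (B i) X := by
  simp only [frobInner_eq_inner, Cmat, map_sub, map_neg, map_sum, map_smul, inner_sub_right,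
    inner_neg_right, inner_sum, inner_smul_right]
  simp only [real_inner_comm (frobVec n X)]

theorem sum_mul_frobInner_le {n m : ℕ} {B : Fin m → Matrix (Fin n) (Fin n) ℝ} {b u : Fin m → ℝ}
    {Ieq Iin : Set (Fin m)} (hunion : Ieq ∪ Iin = Set.univ) {X : Matrix (Fin n) (Fin n) ℝ}
    (heq : ∀ i ∈ Ieq, frobInner (B i) X = b i) (hin : ∀ i ∈ Iin, frobInner (B i) X ≤ b i)
    (hu : ∀ i ∈ Iin, 0 ≤ u i) :
    ∑ i, u i * frobInner (B i) X ≤ ∑ i, u i * b i := by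
  refine Finset.sum_le_sum fun i _ => ?_
  rcases (Set.ext_iff.mp hunion i).mpr trivial with hi | hi
  · rw [heq i hi]
  · exact mul_le_mul_of_nonneg_left (hin i hi) (hu i hi)

theorem mul_le_half_mul_sq_add_sq_div {a b γ : ℝ} (hγ : 0 < γ) :
    a * b ≤ γ / 2 * b ^ 2 + a ^ 2 / (2 * γ) := by
  have key : 0 ≤ (γ * b - a) ^ 2 / (2 * γ) := by positivity
  have : (γ * b - a) ^ 2 / (2 * γ) = γ / 2 * b ^ 2 + a ^ 2 / (2 * γ) - a * b := by
    field_simp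
    ring
  linarith

theorem stmt_10_general (n m : ℕ) (A : Matrix (Fin n) (Fin n) ℝ) (hA : A.IsSymm)
    (B : Fin m → Matrix (Fin n) (Fin n) ℝ) (hB : ∀ i, (B i).IsSymm)
    (b : Fin m → ℝ)
    (Ieq Iin : Set (Fin m)) (hunion : Ieq ∪ Iin = Set.univ)
    (proj : Matrix (Fin n) (Fin n) ℝ → Matrix (Fin n) (Fin n) ℝ)
    (hproj : IsPSDProjection proj)
    (x : Fin n → ℝ) (hx : ∀ i, x i = 1 ∨ x i = -1)
    (heq : ∀ i ∈ Ieq, frobInner (B i) (Matrix.vecMulVec x x) = b i)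
    (hin : ∀ i ∈ Iin, frobInner (B i) (Matrix.vecMulVec x x) ≤ b i)
    (u : Fin m → ℝ) (hu : ∀ i ∈ Iin, 0 ≤ u i)
    (γ : ℝ) (hγ : 0 < γ) :
    dualObj A B b γ proj u - (n : ℝ) ^ 2 / (2 * γ) ≤ x ⬝ᵥ A.mulVec x := by
  set X := vecMulVec x x
  set P := proj (Cmat A B u)
  have hXnorm : frobNorm X = n := by
    rw [frobNorm, frobNormSq_vecMulVec_self, dotProduct_self_of_sign hx,
      Real.sqrt_sq n.cast_nonneg]
  have hvar : frobInner X (Cmat A B u) ≤ frobInner X P :=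
    frobInner_le_frobInner_of_isPSDProjection hproj (isSymm_Cmat hA hB u)
      (posSemidef_vecMulVec_self_star x)
  have hCS : frobInner X P ≤ n * frobNorm P := by
    rw [← hXnorm, frobInner_eq_inner, frobNorm_eq_norm, frobNorm_eq_norm]
    exact real_inner_le_norm _ _
  have hAMGM : n * frobNorm P ≤ γ / 2 * frobNormSq P + n ^ 2 / (2 * γ) := by
    rw [frobNormSq_eq_norm_sq, ← frobNorm_eq_norm]
    exact mul_le_half_mul_sq_add_sq_div hγ
  have hfeas := sum_mul_frobInner_le hunion heq hin hu
  rw [dotProduct_mulVec_eq_frobInner, dualObj]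
  linarith [frobInner_Cmat X A B u]

/-- Proposition 4: for any dual-feasible `u` and any `γ > 0`, `d_γ(u) − n²/(2γ)` is a
lower bound on the BQP objective `xᵀAx` at any feasible binary solution `x`. -/
theorem stmt_10 (n m : ℕ) (A : Matrix (Fin n) (Fin n) ℝ) (hA : A.IsSymm)
    (B : Fin m → Matrix (Fin n) (Fin n) ℝ) (hB : ∀ i, (B i).IsSymm)
    (b : Fin m → ℝ)
    (Ieq Iin : Set (Fin m)) (hunion : Ieq ∪ Iin = Set.univ) (hdisj : Disjoint Ieq Iin)
    (proj : Matrix (Fin n) (Fin n) ℝ → Matrix (Fin n) (Fin n) ℝ)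
    (hproj : IsPSDProjection proj)
    (x : Fin n → ℝ) (hx : ∀ i, x i = 1 ∨ x i = -1)
    (heq : ∀ i ∈ Ieq, frobInner (B i) (Matrix.vecMulVec x x) = b i)
    (hin : ∀ i ∈ Iin, frobInner (B i) (Matrix.vecMulVec x x) ≤ b i)
    (u : Fin m → ℝ) (hu : ∀ i ∈ Iin, 0 ≤ u i)
    (γ : ℝ) (hγ : 0 < γ) :
    dualObj A B b γ proj u - (n : ℝ) ^ 2 / (2 * γ) ≤ x ⬝ᵥ A.mulVec x :=
  stmt_10_general n m A hA B hB b Ieq Iin hunion proj hproj x hx heq hin u hu γ hγ
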